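/- arXiv:1007.0513 — 2 statements merged into one kernel-verified Lean document; each statement's English description precedes it below -/
import Mathlib

section
/- Let (g, B) be a metric n-Lie algebra and W a subspace of g. Then W is an ideal of g if and only if W⊥ ⊆ C_g(W), where C_g(W) = {x ∈ g | [x, W, g, ..., g] = 0} is the centralizer of W. -/
open Function Submodule

/-- The orthogonal complement of a subspace `W` with respect to a bilinear form `B`. -/
def orthB {g : Type*} [AddCommGroup g] [Module ℂ g]
    (B : g →ₗ[ℂ] g →ₗ[ℂ] ℂ) (W : Submodule ℂ g) : Submodule ℂ g where
  carrier := {x | ∀ w ∈ W, B w x = 0}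
  add_mem' := by
    intro a b ha hb w hw
    simp [ha w hw, hb w hw]
  zero_mem' := by
    intro w hw; simp
  smul_mem' := by
    intro c a ha w hw
    simp [ha w hw]

/-- A metric `n`-Lie algebra over `ℂ`. -/
structure MetricNLie (n : ℕ) [NeZero n] (g : Type*) [AddCommGroup g] [Module ℂ g]
    [FiniteDimensional ℂ g] where
  br : MultilinearMap ℂ (fun _ : Fin n => g) g
  alternating : ∀ (x : Fin n → g) (i j : Fin n), i ≠ j → x i = x j → br x = 0
  fund : ∀ x y : Fin n → g,
    br (update y 0 (br x)) = ∑ i, br (update x i (br (update y 0 (x i))))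
  B : g →ₗ[ℂ] g →ₗ[ℂ] ℂ
  symm : ∀ a b, B a b = B b a
  nondeg : ∀ a, (∀ b, B a b = 0) → a = 0
  inv : ∀ (x : Fin n → g) (a b : g),
    B (br (update x 0 a)) b = - B (br (update x 0 b)) a

namespace MetricNLie

variable {n : ℕ} [NeZero n] {g : Type*} [AddCommGroup g] [Module ℂ g]
  [FiniteDimensional ℂ g] (M : MetricNLie n g)

/-- The center `C(g) = {x | [x, g, ..., g] = 0}`. -/
def center : Submodule ℂ g where
  carrier := {x | ∀ y : Fin n → g, M.br (update y 0 x) = 0}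
  add_mem' := by
    intro a b ha hb y
    rw [M.br.map_update_add, ha y, hb y, add_zero]
  zero_mem' := by
    intro y
    exact M.br.map_coord_zero 0 (by simp)
  smul_mem' := by
    intro c a ha y
    rw [M.br.map_update_smul, ha y, smul_zero]

/-- The derived algebra `g¹ = [g, ..., g]`, the span of all brackets. -/
def derived : Submodule ℂ g := Submodule.span ℂ (Set.range M.br)

/-- A subspace `I` is an ideal if `[I, g, ..., g] ⊆ I`. -/
def IsIdeal (I : Submodule ℂ g) : Prop :=
  ∀ (y : Fin n → g) (v : g), v ∈ I → M.br (update y 0 v) ∈ I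

/-- A subspace `I` is a subalgebra if it is closed under the bracket. -/
def IsSubalgebra (I : Submodule ℂ g) : Prop :=
  ∀ y : Fin n → g, (∀ i, y i ∈ I) → M.br y ∈ I

/-- A subspace `W` is isotropic if `B(W, W) = 0`. -/
def Isotropic (W : Submodule ℂ g) : Prop :=
  ∀ x ∈ W, ∀ y ∈ W, M.B x y = 0

/-- The centralizer `C_g(W) = {x | [x, W, g, ..., g] = 0}` of a subspace `W`. -/
def centralizer (W : Submodule ℂ g) : Set g :=
  {x | ∀ (y : Fin n → g) (w : g), w ∈ W → M.br (update (update y 0 x) 1 w) = 0}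

/-- The subspace `[I, g, ..., g]`, spanned by brackets with one entry in `I`. -/
def bracketIdeal (I : Submodule ℂ g) : Submodule ℂ g :=
  Submodule.span ℂ {z | ∃ (y : Fin n → g) (v : g), v ∈ I ∧ z = M.br (update y 0 v)}

/-- The subspace `[I, ..., I]`, spanned by brackets with all entries in `I`. -/
def bracketAll (I : Submodule ℂ g) : Submodule ℂ g :=
  Submodule.span ℂ {z | ∃ y : Fin n → g, (∀ i, y i ∈ I) ∧ z = M.br y}

/-- The derived series `I⁽⁰⁾ = I`, `I⁽ˢ⁺¹⁾ = [I⁽ˢ⁾, ..., I⁽ˢ⁾]` of a subspace `I`. -/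
def derivedSeries (I : Submodule ℂ g) : ℕ → Submodule ℂ g
  | 0 => I
  | s + 1 => M.bracketAll (derivedSeries I s)

/-- An ideal `I` is solvable if its derived series terminates at `0`. -/
def IsSolvable (I : Submodule ℂ g) : Prop :=
  ∃ r : ℕ, M.derivedSeries I r = ⊥

/-- `r` is the solvable radical: the maximal solvable ideal. -/
def IsRadical (r : Submodule ℂ g) : Prop :=
  M.IsIdeal r ∧ M.IsSolvable r ∧ ∀ I : Submodule ℂ g, M.IsIdeal I → M.IsSolvable I → I ≤ r

/-- An ideal `I` is abelian if `[I, I, g, ..., g] = 0`. -/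
def IsAbelian (I : Submodule ℂ g) : Prop :=
  ∀ (y : Fin n → g) (v w : g), v ∈ I → w ∈ I → M.br (update (update y 0 v) 1 w) = 0

end MetricNLie


/-!
By invariance and skew-symmetry, `B([x, w, y₂, …], b) = B(x, [w, b, y₂, …])`. Hence `x ⊥ W` lies in
`C_g(W)` as soon as `[W, g, …, g] ⊆ W`, by non-degeneracy of `B`; conversely, if `W⊥ ⊆ C_g(W)` then
`[W, g, …, g] ⊥ W⊥`, i.e. `[W, g, …, g] ⊆ W⊥⊥ = W` in finite dimension.
-/

namespace MetricNLie

variable {n : ℕ} [NeZero n] {g : Type*} [AddCommGroup g] [Module ℂ g] [FiniteDimensional ℂ g]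
  (M : MetricNLie n g)

def brAlternating : g [⋀^Fin n]→ₗ[ℂ] g :=
  { M.br with map_eq_zero_of_eq' := fun x i j hij hne => M.alternating x i j hne hij }

theorem br_update_swap (h01 : (0 : Fin n) ≠ 1) (y : Fin n → g) (a b : g) :
    M.br (update (update y 0 a) 1 b) = -M.br (update (update y 0 b) 1 a) := by
  have hswap : update (update y 0 b) 1 a ∘ Equiv.swap 0 1 = update (update y 0 a) 1 b := by
    ext i
    rcases eq_or_ne i 0 with rfl | hi0
    · simp [update_of_ne h01]
    rcases eq_or_ne i 1 with rfl | hi1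
    · simp [update_of_ne h01]
    · simp [Equiv.swap_apply_of_ne_of_ne hi0 hi1, update_of_ne hi0, update_of_ne hi1]
  exact hswap ▸ M.brAlternating.map_swap _ h01

theorem B_br_update_update (h01 : (0 : Fin n) ≠ 1) (y : Fin n → g) (x w b : g) :
    M.B (M.br (update (update y 0 x) 1 w)) b = M.B x (M.br (update (update y 0 w) 1 b)) := by
  rw [update_comm h01, M.inv, ← update_comm h01, M.br_update_swap h01, map_neg,
    LinearMap.neg_apply, neg_neg, M.symm]

theorem orthB_orthB (W : Submodule ℂ g) : orthB M.B (orthB M.B W) = W := by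
  have hrefl : M.B.IsRefl := fun a b hab => M.symm a b ▸ hab
  exact LinearMap.BilinForm.orthogonal_orthogonal
    (hrefl.nondegenerate_iff_separatingLeft.mpr M.nondeg) hrefl W

end MetricNLie

theorem isIdeal_iff_orth_le_centralizer {n : ℕ} [NeZero n] {g : Type*} [AddCommGroup g] [Module ℂ g]
    [FiniteDimensional ℂ g] (M : MetricNLie n g) (hn : 2 ≤ n)
    (W : Submodule ℂ g) :
    M.IsIdeal W ↔ ∀ x ∈ orthB M.B W, x ∈ M.centralizer W := by
  have h01 : (0 : Fin n) ≠ 1 := by simp [Fin.ext_iff, Nat.mod_eq_of_lt hn]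
  constructor
  · intro hW x hx y w hw
    refine M.nondeg _ fun b => ?_
    have hwb : M.br (update (update y 0 w) 1 b) ∈ W := update_comm h01.symm b w y ▸ hW _ w hw
    rw [M.B_br_update_update h01, M.symm]
    exact hx _ hwb
  · intro hC y v hv
    rw [← M.orthB_orthB W]
    intro x hx
    have hy : update (update y 0 v) 1 (y 1) = update y 0 v := by
      simp [update_of_ne h01.symm]
    rw [← hy, ← M.B_br_update_update h01, hC x hx y v hv, map_zero, LinearMap.zero_apply]
end

section
/- Let (g, B) be a metric n-Lie algebra with solvable radical r, and let I be an isomaximal ideal (an isotropic ideal maximal among isotropic ideals). Then r ∩ r⊥ ⊆ I ⊆ r. -/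
open Function Submodule

/-! An isotropic ideal `I` is abelian: pairing `[v, w, …]` (with `v, w ∈ I`) against any `c` and
moving `v` across by invariance leaves `B([c, w, …], v)`, which vanishes since `[c, w, …] ∈ I`.
Abelian ideals are solvable, so `I ≤ r`. Then `I + (r ∩ r⊥)` is again an isotropic ideal containing
`I`, and isomaximality forces it to equal `I`. -/

namespace MetricNLie

variable {n : ℕ} [NeZero n] {g : Type*} [AddCommGroup g] [Module ℂ g] [FiniteDimensional ℂ g]
  {M : MetricNLie n g} {I J : Submodule ℂ g}

variable (M) in
def toAlternatingMap : g [⋀^Fin n]→ₗ[ℂ] g :=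
  { M.br with map_eq_zero_of_eq' := fun v i j h hij => M.alternating v i j hij h }

theorem br_comp_swap (y : Fin n → g) {i j : Fin n} (hij : i ≠ j) :
    M.br (y ∘ Equiv.swap i j) = -M.br y :=
  M.toAlternatingMap.map_swap y hij

theorem IsIdeal.br_mem (hI : M.IsIdeal I) (y : Fin n → g) (i : Fin n) (hy : y i ∈ I) :
    M.br y ∈ I := by
  rcases eq_or_ne i 0 with rfl | hi
  · simpa using hI y (y 0) hy
  · have hswap : update (y ∘ Equiv.swap 0 i) 0 (y i) = y ∘ Equiv.swap 0 i :=
      update_eq_self_iff.2 (by simp)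
    have h := hI (y ∘ Equiv.swap 0 i) (y i) hy
    rw [hswap, br_comp_swap y hi.symm] at h
    simpa using I.neg_mem h

theorem IsIdeal.sup (hI : M.IsIdeal I) (hJ : M.IsIdeal J) : M.IsIdeal (I ⊔ J) := by
  intro y v hv
  obtain ⟨a, ha, b, hb, rfl⟩ := mem_sup.1 hv
  rw [M.br.map_update_add]
  exact add_mem (mem_sup_left (hI y a ha)) (mem_sup_right (hJ y b hb))

theorem IsIdeal.inf (hI : M.IsIdeal I) (hJ : M.IsIdeal J) : M.IsIdeal (I ⊓ J) :=
  fun y v hv => ⟨hI y v hv.1, hJ y v hv.2⟩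

theorem IsIdeal.orthB (hI : M.IsIdeal I) : M.IsIdeal (orthB M.B I) := by
  intro y v hv w hw
  rw [M.symm, M.inv, hv _ (hI y w hw), neg_zero]

theorem isotropic_inf_orthB (W : Submodule ℂ g) : M.Isotropic (W ⊓ orthB M.B W) :=
  fun x hx _ hy => hy.2 x hx.1

theorem Isotropic.sup (hI : M.Isotropic I) (hJ : M.Isotropic J)
    (hIJ : ∀ x ∈ I, ∀ y ∈ J, M.B x y = 0) : M.Isotropic (I ⊔ J) := by
  intro x hx y hy
  obtain ⟨a, ha, b, hb, rfl⟩ := mem_sup.1 hx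
  obtain ⟨c, hc, d, hd, rfl⟩ := mem_sup.1 hy
  simp only [map_add, LinearMap.add_apply, hI a ha c hc, hIJ a ha d hd, hJ b hb d hd,
    M.symm b c, hIJ c hc b hb, add_zero]

theorem IsIdeal.isAbelian_of_isotropic (hn : 2 ≤ n) (hI : M.IsIdeal I) (hiso : M.Isotropic I) :
    M.IsAbelian I := by
  have h10 : (1 : Fin n) ≠ 0 := Fin.ne_of_val_ne (by simp [Nat.mod_eq_of_lt hn])
  intro y v w hv hw
  refine M.nondeg _ fun c => ?_
  set x := update (update y 0 v) 1 w
  have hx : update x 0 v = x := update_eq_self_iff.2 (by simp [x, h10.symm])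
  have hc : M.br (update x 0 c) ∈ I := hI.br_mem _ 1 (by simpa [x, h10] using hw)
  rw [← hx, M.inv, hiso _ hc v hv, neg_zero]

theorem IsAbelian.isSolvable (hI : M.IsAbelian I) : M.IsSolvable I := by
  refine ⟨1, span_eq_bot.2 ?_⟩
  rintro _ ⟨y, hy, rfl⟩
  simpa using hI y (y 0) (y 1) (hy 0) (hy 1)

theorem IsRadical.le_of_isotropic {r : Submodule ℂ g} (hr : M.IsRadical r) (hn : 2 ≤ n)
    (hI : M.IsIdeal I) (hiso : M.Isotropic I) : I ≤ r :=
  hr.2.2 I hI (hI.isAbelian_of_isotropic hn hiso).isSolvable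

end MetricNLie

theorem isomaximal_between_rad_inf_orth_and_rad {n : ℕ} [NeZero n] {g : Type*} [AddCommGroup g] [Module ℂ g]
    [FiniteDimensional ℂ g] (M : MetricNLie n g) (hn : 2 ≤ n)
    (r I : Submodule ℂ g) (hr : M.IsRadical r)
    (hI : M.IsIdeal I) (hiso : M.Isotropic I)
    (hmax : ∀ J : Submodule ℂ g, M.IsIdeal J → M.Isotropic J → I ≤ J → J = I) :
    r ⊓ orthB M.B r ≤ I ∧ I ≤ r := by
  have hIr : I ≤ r := hr.le_of_isotropic hn hI hiso
  have hsup : I ⊔ (r ⊓ orthB M.B r) = I :=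
    hmax _ (hI.sup (hr.1.inf hr.1.orthB))
      (hiso.sup (MetricNLie.isotropic_inf_orthB r) fun x hx _ hy => hy.2 x (hIr hx)) le_sup_left
  exact ⟨hsup ▸ le_sup_right, hIr⟩
end
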